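/- Let ρ : T^d → [0,∞) with ∫ρ = 1, let d > 2, 2* = 2d/(d−2), r > d with conjugate q, and ν ∈ (0,1) with ν > 2/r + 2/2*. Set μ = (1 − 1/q)/(ν − 2/2*). Then 0 < 2μ < 1, and if additionally the Sobolev bound ‖ρ^{ν/2}‖_{L^{2*}} ≤ C₀(1 + ‖D(ρ^{ν/2})‖_{L^2}) holds, then ‖ρ‖_{L^q(T^d)} ≤ C + C ‖D(ρ^{ν/2})‖_{L^2(T^d)}^{2μ} for a constant C depending on C₀, d, q, ν. -/

import Mathlib

open MeasureTheory
open scoped ENNReal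

/-!
Since `‖ρ‖₁ = 1`, Hölder's inequality interpolates `‖ρ‖_q ≤ ‖ρ‖_s ^ θ` between `L¹` and `Lˢ`,
`s = 2* ν / 2`, with `θ = ν μ`. The Sobolev bound reads `‖ρ‖_s ^ (ν / 2) ≤ C₀ (1 + G)`, so
`‖ρ‖_q ≤ (C₀ (1 + G)) ^ (2 θ / ν) = (C₀ (1 + G)) ^ (2 μ)`, and `2 μ ≤ 1` makes `t ↦ t ^ (2 μ)`
subadditive.
-/

section Interpolation

variable {α E : Type*} [MeasurableSpace α] {μ : Measure α} [NormedAddCommGroup E]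

theorem eLpNorm_le_eLpNorm_one_rpow_mul_eLpNorm_rpow {f : α → E}
    (hf : AEStronglyMeasurable f μ) {q s θ : ℝ} (hq : 0 < q) (hs : 0 < s)
    (hθ₀ : 0 ≤ θ) (hθ₁ : θ ≤ 1) (hqs : 1 / q = (1 - θ) + θ / s) :
    eLpNorm f (ENNReal.ofReal q) μ
      ≤ eLpNorm f 1 μ ^ (1 - θ) * eLpNorm f (ENNReal.ofReal s) μ ^ θ := by
  have ha : 0 ≤ (1 - θ) * q := mul_nonneg (by linarith) hq.le
  have hb : 0 ≤ θ * q / s := by positivity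
  have hab : (1 - θ) * q + θ * q / s = 1 := by
    field_simp at hqs ⊢
    linarith
  have hsplit : ∀ x, ‖f x‖ₑ ^ q = ‖f x‖ₑ ^ ((1 - θ) * q) * (‖f x‖ₑ ^ s) ^ (θ * q / s) := by
    intro x
    rw [← ENNReal.rpow_mul, ← ENNReal.rpow_add_of_nonneg _ _ ha (by positivity)]
    congr 1
    field_simp
    ring
  have hHolder := ENNReal.lintegral_mul_norm_pow_le hf.enorm (hf.enorm.pow_const s) ha hb hab
  rw [eLpNorm_eq_eLpNorm' (by simpa using hq) ENNReal.ofReal_ne_top,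
    eLpNorm_eq_eLpNorm' (by simpa using hs) ENNReal.ofReal_ne_top, eLpNorm_one_eq_lintegral_enorm,
    ENNReal.toReal_ofReal hq.le, ENNReal.toReal_ofReal hs.le]
  simp only [eLpNorm']
  calc (∫⁻ x, ‖f x‖ₑ ^ q ∂μ) ^ (1 / q)
      ≤ ((∫⁻ x, ‖f x‖ₑ ∂μ) ^ ((1 - θ) * q) * (∫⁻ x, ‖f x‖ₑ ^ s ∂μ) ^ (θ * q / s)) ^ (1 / q) := by
        rw [lintegral_congr hsplit]
        gcongr
    _ = (∫⁻ x, ‖f x‖ₑ ∂μ) ^ (1 - θ) * ((∫⁻ x, ‖f x‖ₑ ^ s ∂μ) ^ (1 / s)) ^ θ := by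
        rw [ENNReal.mul_rpow_of_nonneg _ _ (by positivity), ← ENNReal.rpow_mul, ← ENNReal.rpow_mul,
          ← ENNReal.rpow_mul]
        congr 2 <;> field_simp

theorem eLpNorm_le_rpow_inv_of_eLpNorm_rpow_le {f : α → ℝ} (hf : ∀ x, 0 ≤ f x) {a : ℝ}
    (ha : 0 < a) {p M : ℝ≥0∞} (h : eLpNorm (fun x => f x ^ a) p μ ≤ M) :
    eLpNorm f (p * ENNReal.ofReal a) μ ≤ M ^ a⁻¹ := by
  have hnorm := eLpNorm_norm_rpow (p := p) (μ := μ) f ha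
  simp only [Real.norm_of_nonneg (hf _)] at hnorm
  rw [ENNReal.le_rpow_inv_iff ha, ← hnorm]
  exact h

end Interpolation

section Exponents

variable {r q ν μ p : ℝ}

theorem sub_two_div_pos (hr : 0 < r) (hν : 2 / r + 2 / p < ν) : 0 < ν - 2 / p := by
  have : 0 < 2 / r := by positivity
  linarith

theorem exponent_pos (hr : 0 < r) (hrq : 1 / r + 1 / q = 1) (hν : 2 / r + 2 / p < ν)
    (hμ : μ = (1 - 1 / q) / (ν - 2 / p)) : 0 < μ := by
  have := sub_two_div_pos hr hν
  rw [hμ, show 1 - 1 / q = 1 / r by linarith]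
  positivity

theorem two_mul_exponent_lt_one (hr : 0 < r) (hrq : 1 / r + 1 / q = 1) (hν : 2 / r + 2 / p < ν)
    (hμ : μ = (1 - 1 / q) / (ν - 2 / p)) : 2 * μ < 1 := by
  rw [hμ, show 1 - 1 / q = 1 / r by linarith, mul_div_assoc', div_lt_one (sub_two_div_pos hr hν)]
  linarith [show 2 / r = 2 * (1 / r) by ring]

theorem mul_exponent_le_one (hr : 2 < r) (hp : 2 ≤ p) (hrq : 1 / r + 1 / q = 1)
    (hν : 2 / r + 2 / p < ν) (hμ : μ = (1 - 1 / q) / (ν - 2 / p)) : ν * μ ≤ 1 := by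
  have hr0 : 0 < r := by linarith
  have hden := sub_two_div_pos hr0 hν
  have ha : 0 < 1 / r := by positivity
  have ha' : 1 / r < 1 / 2 := one_div_lt_one_div_of_lt two_pos hr
  have hb : 2 / p ≤ 1 := (div_le_one (by linarith)).mpr hp
  rw [hμ, show 1 - 1 / q = 1 / r by linarith, mul_div_assoc', div_le_one hden]
  have h2r : 2 / r = 2 * (1 / r) := by ring
  -- `ν (1 - 1/r) - 2/p = (ν - 2/r - 2/p)(1 - 1/r) + (1/r)(2 - 2/r - 2/p)`
  nlinarith [mul_pos (sub_pos.mpr hν) (by linarith : 0 < 1 - 1 / r),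
    mul_pos ha (by linarith : 0 < 2 - 2 / r - 2 / p)]

theorem one_div_eq_interpolation (hν : ν ≠ 0) (hp : p ≠ 0) (hden : ν - 2 / p ≠ 0)
    (hμ : μ = (1 - 1 / q) / (ν - 2 / p)) :
    1 / q = (1 - ν * μ) + ν * μ / (p * (ν / 2)) := by
  have hμden : μ * (ν - 2 / p) = 1 - 1 / q := by rw [hμ, div_mul_cancel₀ _ hden]
  calc 1 / q = 1 - μ * (ν - 2 / p) := by rw [hμden]; ring
    _ = (1 - ν * μ) + ν * μ / (p * (ν / 2)) := by field_simp; ring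

end Exponents

theorem rpow_mul_one_add_le {c g x : ℝ} (hc : 0 ≤ c) (hg : 0 ≤ g) (hx₀ : 0 ≤ x) (hx₁ : x ≤ 1) :
    (c * (1 + g)) ^ x ≤ (c ^ x + 1) + (c ^ x + 1) * g ^ x := by
  have hcx : 0 ≤ c ^ x := Real.rpow_nonneg hc x
  have hgx : 0 ≤ g ^ x := Real.rpow_nonneg hg x
  have hsub : (1 + g) ^ x ≤ 1 + g ^ x := by
    simpa using Real.rpow_add_le_add_rpow zero_le_one hg hx₀ hx₁
  rw [Real.mul_rpow hc (by linarith)]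
  nlinarith [mul_le_mul_of_nonneg_left hsub hcx]

theorem stmt17_general (d : ℕ) (hd : 2 < d) (r q ν μ : ℝ) (hr : (d : ℝ) < r)
    (hrq : 1 / r + 1 / q = 1)
    (hνbig : 2 / r + 2 / (2 * (d : ℝ) / ((d : ℝ) - 2)) < ν)
    (hμ : μ = (1 - 1 / q) / (ν - 2 / (2 * (d : ℝ) / ((d : ℝ) - 2)))) :
    (0 < 2 * μ ∧ 2 * μ < 1) ∧
    ∀ C₀ > (0 : ℝ), ∃ C > (0 : ℝ),
      ∀ (ρ : (Fin d → AddCircle (1 : ℝ)) → ℝ) (G : ℝ),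
        Measurable ρ → (∀ x, 0 ≤ ρ x) → Integrable ρ → ∫ x, ρ x = 1 → 0 ≤ G →
        eLpNorm (fun x => ρ x ^ (ν / 2))
            (ENNReal.ofReal (2 * (d : ℝ) / ((d : ℝ) - 2))) volume
          ≤ ENNReal.ofReal (C₀ * (1 + G)) →
        eLpNorm ρ (ENNReal.ofReal q) volume
          ≤ ENNReal.ofReal (C + C * G ^ (2 * μ)) := by
  set p : ℝ := 2 * (d : ℝ) / ((d : ℝ) - 2) with hp
  have hd' : (2 : ℝ) < d := by exact_mod_cast hd
  have hp2 : 2 ≤ p := by rw [hp, le_div_iff₀ (by linarith)]; linarith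
  have hr2 : 2 < r := by linarith
  have hr0 : 0 < r := by linarith
  have hμ0 := exponent_pos hr0 hrq hνbig hμ
  have hν0 : 0 < ν := by linarith [sub_two_div_pos hr0 hνbig, (by positivity : 0 < 2 / p)]
  have hq0 : 0 < q := one_div_pos.mp (by linarith [(div_lt_one hr0).mpr (by linarith : 1 < r)])
  have h2μ1 := two_mul_exponent_lt_one hr0 hrq hνbig hμ
  refine ⟨⟨by positivity, h2μ1⟩, fun C₀ hC₀ => ⟨C₀ ^ (2 * μ) + 1, by positivity, ?_⟩⟩
  intro ρ G _ hρ0 hρint hρ1 hG hSob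
  have hρL1 : eLpNorm ρ 1 volume = 1 := by
    rw [eLpNorm_one_eq_lintegral_enorm, ← ofReal_integral_norm_eq_lintegral_enorm hρint]
    simp only [Real.norm_of_nonneg (hρ0 _), hρ1, ENNReal.ofReal_one]
  have hρs := eLpNorm_le_rpow_inv_of_eLpNorm_rpow_le hρ0 (by positivity) hSob
  rw [← ENNReal.ofReal_mul (by positivity)] at hρs
  calc eLpNorm ρ (ENNReal.ofReal q) volume
      ≤ eLpNorm ρ 1 volume ^ (1 - ν * μ) * eLpNorm ρ (ENNReal.ofReal (p * (ν / 2))) volume ^ (ν * μ) :=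
        eLpNorm_le_eLpNorm_one_rpow_mul_eLpNorm_rpow hρint.aestronglyMeasurable hq0
          (by positivity) (by positivity) (mul_exponent_le_one hr2 hp2 hrq hνbig hμ)
          (one_div_eq_interpolation hν0.ne' (by positivity) (sub_two_div_pos hr0 hνbig).ne' hμ)
    _ ≤ (ENNReal.ofReal (C₀ * (1 + G)) ^ (ν / 2)⁻¹) ^ (ν * μ) := by
        rw [hρL1, ENNReal.one_rpow, one_mul]
        gcongr
    _ = ENNReal.ofReal ((C₀ * (1 + G)) ^ (2 * μ)) := by
        rw [← ENNReal.rpow_mul, ENNReal.ofReal_rpow_of_nonneg (by positivity) (by positivity)]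
        congr 2
        field_simp
    _ ≤ ENNReal.ofReal ((C₀ ^ (2 * μ) + 1) + (C₀ ^ (2 * μ) + 1) * G ^ (2 * μ)) :=
        ENNReal.ofReal_le_ofReal (rpow_mul_one_add_le hC₀.le hG (by positivity) h2μ1.le)

/-- Let `d > 2`, `2* = 2d/(d−2)`, `r > d` with conjugate `q`,
`ν ∈ (0,1)` with `ν > 2/r + 2/2*`, and `μ = (1 − 1/q)/(ν − 2/2*)`. Then
`0 < 2μ < 1`, and for any probability density `ρ ≥ 0` on the `d`-torus
satisfying the Sobolev bound `‖ρ^{ν/2}‖_{L^{2*}} ≤ C₀(1 + G)` (where `G`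
plays the role of `‖D(ρ^{ν/2})‖_{L²}`), one has
`‖ρ‖_{L^q} ≤ C + C G^{2μ}` with `C` depending only on `C₀, d, q, ν`. -/
theorem stmt17 (d : ℕ) (hd : 2 < d) (r q ν μ : ℝ) (hr : (d : ℝ) < r)
    (hrq : 1 / r + 1 / q = 1) (hν0 : 0 < ν) (hν1 : ν < 1)
    (hνbig : 2 / r + 2 / (2 * (d : ℝ) / ((d : ℝ) - 2)) < ν)
    (hμ : μ = (1 - 1 / q) / (ν - 2 / (2 * (d : ℝ) / ((d : ℝ) - 2)))) :
    (0 < 2 * μ ∧ 2 * μ < 1) ∧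
    ∀ C₀ > (0 : ℝ), ∃ C > (0 : ℝ),
      ∀ (ρ : (Fin d → AddCircle (1 : ℝ)) → ℝ) (G : ℝ),
        Measurable ρ → (∀ x, 0 ≤ ρ x) → Integrable ρ → ∫ x, ρ x = 1 → 0 ≤ G →
        eLpNorm (fun x => ρ x ^ (ν / 2))
            (ENNReal.ofReal (2 * (d : ℝ) / ((d : ℝ) - 2))) volume
          ≤ ENNReal.ofReal (C₀ * (1 + G)) →
        eLpNorm ρ (ENNReal.ofReal q) volume
          ≤ ENNReal.ofReal (C + C * G ^ (2 * μ)) :=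
  stmt17_general d hd r q ν μ hr hrq hνbig hμ
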